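/- arXiv:1303.2059 — 4 statements merged into one kernel-verified Lean document; each statement's English description precedes it below -/
import Mathlib

section
/- In every acyclic hypergraph (i.e., a hypergraph of generalized hypertree width 1) without isolated vertices, the maximum size of an independent set equals the minimum size of an edge cover. -/
structure GHD (V : Type) [DecidableEq V] (E : Finset (Finset V)) where
  T : Type
  G : SimpleGraph T
  isTree : G.IsTree
  root : T
  lam : T → Finset (Finset V)
  chi : T → Finset V
  lam_sub : ∀ t, lam t ⊆ E
  conn : ∀ v : V, (G.induce {t | v ∈ chi t}).Preconnected
  edge_cover : ∀ e ∈ E, ∃ t, e ⊆ chi t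
  guard : ∀ t, ∀ v ∈ chi t, ∃ e ∈ lam t, v ∈ e

def IsIndep {V : Type} [DecidableEq V] (E : Finset (Finset V)) (I : Finset V) : Prop :=
  ∀ e ∈ E, ∀ u ∈ I, ∀ v ∈ I, u ∈ e → v ∈ e → u = v

def GHD.Desc {V : Type} [DecidableEq V] {E : Finset (Finset V)} (D : GHD V E)
    (t s : D.T) : Prop :=
  ∀ p : D.G.Walk s D.root, t ∈ p.support

def GHD.Vt {V : Type} [DecidableEq V] {E : Finset (Finset V)} (D : GHD V E)
    (t : D.T) : Set V :=
  {v | ∃ s, D.Desc t s ∧ v ∈ D.chi s}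

def IsEdgeCover {V : Type} [Fintype V] [DecidableEq V]
    (E : Finset (Finset V)) (C : Finset (Finset V)) : Prop :=
  C ⊆ E ∧ ∀ v : V, ∃ e ∈ C, v ∈ e

/-!
Root the width-one decomposition and give every vertex its topmost bag. Take a vertex `v` whose
topmost bag `t` is as deep as possible, and let `e` be the single edge guarding `t`. If `u` lies on
an edge `f` through `v`, the bags of `u` form a subtree containing a bag of `f`, which lies below
`t`, and a bag at depth at most that of `t`; so `t` is a bag of `u` and `u ∈ e`. Hence every edge
through `v` is contained in `e`, so `v` may join the independent set and `e` the cover. Deleting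
the vertices of `e` keeps a width-one decomposition, so induction produces an independent set and
a cover of the same size, while `|I| ≤ |C|` holds for every independent set and every cover.
-/

namespace SimpleGraph

lemma Preconnected.exists_walk_support_subset {T : Type*} {G : SimpleGraph T} {S : Set T}
    (hS : (G.induce S).Preconnected) {a b : T} (ha : a ∈ S) (hb : b ∈ S) :
    ∃ w : G.Walk a b, ∀ x ∈ w.support, x ∈ S := by
  obtain ⟨w⟩ := hS ⟨a, ha⟩ ⟨b, hb⟩
  refine ⟨w.map (Embedding.induce S).toHom, fun x hx => ?_⟩
  obtain ⟨y, -, rfl⟩ := List.mem_map.1 (w.support_map (Embedding.induce S).toHom ▸ hx)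
  exact y.2

namespace IsTree

variable {T : Type*} {G : SimpleGraph T} (hG : G.IsTree)

noncomputable def pathTo (a r : T) : G.Walk a r :=
  (hG.existsUnique_path a r).exists.choose

lemma isPath_pathTo (a r : T) : (hG.pathTo a r).IsPath :=
  (hG.existsUnique_path a r).exists.choose_spec

variable {r : T}

lemma eq_pathTo {a : T} {p : G.Walk a r} (hp : p.IsPath) : p = hG.pathTo a r :=
  (hG.existsUnique_path a r).unique hp (hG.isPath_pathTo a r)

lemma mem_support_of_mem_pathTo {s t : T} (ht : t ∈ (hG.pathTo s r).support)
    (p : G.Walk s r) : t ∈ p.support := by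
  classical
  rw [← hG.eq_pathTo p.bypass_isPath] at ht
  exact p.support_bypass_subset_support ht

lemma eq_of_mem_pathTo {s t : T} (ht : t ∈ (hG.pathTo s r).support)
    (hle : (hG.pathTo s r).length ≤ (hG.pathTo t r).length) : t = s := by
  classical
  have hdrop : (hG.pathTo s r).dropUntil t ht = hG.pathTo t r :=
    hG.eq_pathTo ((hG.isPath_pathTo s r).dropUntil ht)
  have hlen := congrArg Walk.length ((hG.pathTo s r).take_spec ht)
  rw [Walk.length_append, hdrop] at hlen
  exact (Walk.eq_of_length_eq_zero (p := (hG.pathTo s r).takeUntil t ht) (by omega)).symm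

lemma pathTo_eq_cons_or {b c : T} (hadj : G.Adj b c) :
    hG.pathTo b r = .cons hadj (hG.pathTo c r) ∨
      hG.pathTo c r = .cons hadj.symm (hG.pathTo b r) := by
  by_cases hb : b ∈ (hG.pathTo c r).support
  · right
    have hc : c ∉ (hG.pathTo b r).support := by
      simpa using hG.isAcyclic.ne_mem_support_of_support_of_adj_of_isPath
        (hG.isPath_pathTo c r).reverse (hG.isPath_pathTo b r).reverse hadj.symm (by simpa using hb)
    exact (hG.eq_pathTo ((Walk.cons_isPath_iff _ _).2 ⟨hG.isPath_pathTo b r, hc⟩)).symm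
  · left
    exact (hG.eq_pathTo ((Walk.cons_isPath_iff _ _).2 ⟨hG.isPath_pathTo c r, hb⟩)).symm

lemma mem_pathTo_of_forall_le {S : Set T} (hS : (G.induce S).Preconnected) {a b : T}
    (ha : a ∈ S) (hmin : ∀ x ∈ S, (hG.pathTo a r).length ≤ (hG.pathTo x r).length)
    (hb : b ∈ S) : a ∈ (hG.pathTo b r).support := by
  obtain ⟨w, hw⟩ := hS.exists_walk_support_subset hb ha
  clear hb
  induction w with
  | nil => exact Walk.start_mem_support _
  | @cons b c a hadj w ih =>
    have ih := ih ha hmin fun x hx => hw x (List.mem_cons_of_mem _ hx)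
    rcases hG.pathTo_eq_cons_or (r := r) hadj with hbc | hcb
    · rw [hbc, Walk.support_cons]
      exact List.mem_cons_of_mem _ ih
    · rw [hcb, Walk.support_cons, List.mem_cons] at ih
      refine ih.resolve_left fun hac => ?_
      have := hmin b (hw b (Walk.start_mem_support _))
      rw [hac, hcb, Walk.length_cons] at this
      omega

lemma mem_of_mem_pathTo {S : Set T} (hS : (G.induce S).Preconnected) {a b t : T}
    (ha : a ∈ S) (hb : b ∈ S) (ht : t ∈ (hG.pathTo b r).support)
    (hle : (hG.pathTo a r).length ≤ (hG.pathTo t r).length) : t ∈ S := by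
  obtain ⟨w, hw⟩ := hS.exists_walk_support_subset hb ha
  rcases (Walk.mem_support_append_iff _ _).1
    (hG.mem_support_of_mem_pathTo ht (w.append (hG.pathTo a r))) with htw | hta
  · exact hw t htw
  · exact hG.eq_of_mem_pathTo hta hle ▸ ha

end IsTree

end SimpleGraph

lemma Finset.sup_image_sdiff_id {α : Type*} [GeneralizedBooleanAlgebra α] [DecidableEq α]
    (s : Finset α) (a : α) : (s.image (· \ a)).sup id = s.sup id \ a := by
  rw [Finset.sup_image]
  exact Finset.sup_sdiff_right s id a

variable {V : Type} [DecidableEq V]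

lemma IsIndep.card_le_card {E C : Finset (Finset V)} {I : Finset V} (hI : IsIndep E I)
    (hCE : C ⊆ E) (hIC : ∀ v ∈ I, ∃ c ∈ C, v ∈ c) : I.card ≤ C.card :=
  Finset.card_le_card_of_forall_subsingleton (· ∈ ·) hIC
    fun c hc _ hx _ hy => hI c (hCE hc) _ hx.1 _ hy.1 hx.2 hy.2

lemma IsIndep.insert_of_forall_subset {E : Finset (Finset V)} {I e : Finset V} {v : V}
    (hI : IsIndep (E.image (· \ e)) I) (hIe : Disjoint I e) (hv : ∀ f ∈ E, v ∈ f → f ⊆ e) :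
    IsIndep E (insert v I) := by
  intro g hg x hx y hy hxg hyg
  rw [Finset.mem_insert] at hx hy
  rcases hx with rfl | hx <;> rcases hy with rfl | hy
  · rfl
  · exact absurd (hv g hg hxg hyg) (Finset.disjoint_left.1 hIe hy)
  · exact absurd (hv g hg hyg hxg) (Finset.disjoint_left.1 hIe hx)
  · exact hI _ (Finset.mem_image_of_mem _ hg) x hx y hy
      (Finset.mem_sdiff.2 ⟨hxg, Finset.disjoint_left.1 hIe hx⟩)
      (Finset.mem_sdiff.2 ⟨hyg, Finset.disjoint_left.1 hIe hy⟩)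

namespace GHD

def deleteVerts {E : Finset (Finset V)} (D : GHD V E) (e : Finset V) : GHD V (E.image (· \ e)) where
  T := D.T
  G := D.G
  isTree := D.isTree
  root := D.root
  lam t := (D.lam t).image (· \ e)
  chi t := D.chi t \ e
  lam_sub t := Finset.image_subset_image (D.lam_sub t)
  conn v := by
    by_cases hve : v ∈ e
    · exact fun a => absurd a.2 (by simp [hve])
    · have hS : {t | v ∈ D.chi t \ e} = {t | v ∈ D.chi t} := by simp [hve]
      exact hS ▸ D.conn v
  edge_cover := by
    intro _ hfe
    obtain ⟨f, hf, rfl⟩ := Finset.mem_image.1 hfe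
    obtain ⟨t, ht⟩ := D.edge_cover f hf
    exact ⟨t, Finset.sdiff_subset_sdiff ht le_rfl⟩
  guard t v hv := by
    rw [Finset.mem_sdiff] at hv
    obtain ⟨f, hf, hvf⟩ := D.guard t v hv.1
    exact ⟨f \ e, Finset.mem_image_of_mem _ hf, Finset.mem_sdiff.2 ⟨hvf, hv.2⟩⟩

theorem exists_forall_subset {E : Finset (Finset V)} (D : GHD V E) (hw : ∀ t, (D.lam t).card ≤ 1)
    (hne : (E.sup id).Nonempty) : ∃ e ∈ E, ∃ v ∈ e, ∀ f ∈ E, v ∈ f → f ⊆ e := by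
  let depth t := (D.isTree.pathTo t D.root).length
  have htop : ∀ v ∈ E.sup id, ∃ t, v ∈ D.chi t ∧ ∀ s, v ∈ D.chi s → depth t ≤ depth s := by
    intro v hv
    obtain ⟨f, hf, hvf⟩ := Finset.mem_sup.1 hv
    obtain ⟨t, ht⟩ := D.edge_cover f hf
    exact ⟨_, Function.argminOn_mem depth {s | v ∈ D.chi s} ⟨t, ht hvf⟩,
      fun s hs => Function.argminOn_le depth {s | v ∈ D.chi s} hs⟩
  choose top htop_mem htop_le using htop
  obtain ⟨⟨v, hv⟩, -, hvmax⟩ :=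
    (E.sup id).attach.exists_max_image (fun v => depth (top v.1 v.2)) (by simpa using hne)
  obtain ⟨e, he, hve⟩ := D.guard _ v (htop_mem v hv)
  refine ⟨e, D.lam_sub _ he, v, hve, fun g hg hvg u hug => ?_⟩
  obtain ⟨tg, hgt⟩ := D.edge_cover g hg
  have hu : u ∈ E.sup id := Finset.mem_sup.2 ⟨g, hg, hug⟩
  have hv_top : top v hv ∈ (D.isTree.pathTo tg D.root).support :=
    D.isTree.mem_pathTo_of_forall_le (D.conn v) (htop_mem v hv) (htop_le v hv) (hgt hvg)
  have hu_top : u ∈ D.chi (top v hv) :=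
    D.isTree.mem_of_mem_pathTo (D.conn u) (htop_mem u hu) (hgt hug) hv_top
      (hvmax ⟨u, hu⟩ (Finset.mem_attach _ _))
  obtain ⟨e', he', hue'⟩ := D.guard _ u hu_top
  rwa [Finset.card_le_one.1 (hw _) e' he' e he] at hue'

theorem exists_isIndep_cover_card_le {E : Finset (Finset V)} (D : GHD V E)
    (hw : ∀ t, (D.lam t).card ≤ 1) :
    ∃ (I : Finset V) (C : Finset (Finset V)), IsIndep E I ∧ I ⊆ E.sup id ∧ C ⊆ E ∧
      E.sup id ⊆ C.sup id ∧ C.card ≤ I.card := by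
  by_cases hne : (E.sup id).Nonempty
  swap
  · refine ⟨∅, ∅, fun _ _ _ h => absurd h (Finset.notMem_empty _), Finset.empty_subset _,
      Finset.empty_subset _, ?_, le_rfl⟩
    simp [Finset.not_nonempty_iff_eq_empty.1 hne]
  obtain ⟨e, he, v, hve, hv⟩ := D.exists_forall_subset hw hne
  have he_sup : e ⊆ E.sup id := Finset.le_sup (f := id) he
  obtain ⟨I', C', hI', hI'_sup, hC'E, hC'_cov, hC'I'⟩ :=
    (D.deleteVerts e).exists_isIndep_cover_card_le fun t => Finset.card_image_le.trans (hw t)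
  rw [Finset.sup_image_sdiff_id] at hI'_sup hC'_cov
  obtain ⟨C, hCE, hC_inj, rfl⟩ := Finset.exists_subset_injOn_image_eq_of_surjOn
    (E : Set (Finset V)) C' fun c hc => by simpa using hC'E hc
  have hI'e : Disjoint I' e := Finset.disjoint_of_subset_left hI'_sup Finset.sdiff_disjoint
  have hvI' : v ∉ I' := fun h => Finset.disjoint_left.1 hI'e h hve
  refine ⟨insert v I', insert e C, hI'.insert_of_forall_subset hI'e hv,
    Finset.insert_subset (he_sup hve) (hI'_sup.trans Finset.sdiff_subset),
    Finset.insert_subset he hCE, ?_, ?_⟩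
  · rw [Finset.sup_image_sdiff_id] at hC'_cov
    rw [Finset.sup_insert]
    calc E.sup id ⊆ e ⊔ (E.sup id \ e) := le_sup_sdiff
      _ ⊆ e ⊔ C.sup id := sup_le_sup_left (hC'_cov.trans Finset.sdiff_subset) e
  · rw [Finset.card_image_of_injOn hC_inj] at hC'I'
    rw [Finset.card_insert_of_notMem hvI']
    exact (Finset.card_insert_le _ _).trans (Nat.succ_le_succ hC'I')
termination_by (E.sup id).card
decreasing_by
  rw [Finset.sup_image_sdiff_id]
  exact Finset.card_lt_card (Finset.sdiff_ssubset he_sup ⟨v, hve⟩)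

end GHD

/-- In an acyclic hypergraph (generalized hypertree width 1) without isolated
vertices, the maximum size of an independent set equals the minimum size of an
edge cover. -/
theorem acyclic_max_indep_eq_min_cover {V : Type} [Fintype V] [DecidableEq V]
    (E : Finset (Finset V))
    (hacyclic : ∃ D : GHD V E, ∀ t, (D.lam t).card ≤ 1)
    (hnoiso : ∀ v : V, ∃ e ∈ E, v ∈ e) :
    sSup {n : ℕ | ∃ I : Finset V, IsIndep E I ∧ I.card = n} =
      sInf {n : ℕ | ∃ C : Finset (Finset V), IsEdgeCover E C ∧ C.card = n} := by
  obtain ⟨D, hw⟩ := hacyclic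
  obtain ⟨I, C, hI, -, hCE, hcov, hCI⟩ := D.exists_isIndep_cover_card_le hw
  have hC : IsEdgeCover E C := ⟨hCE, fun v => by
    obtain ⟨e, he, hve⟩ := hnoiso v
    simpa using hcov (Finset.mem_sup.2 ⟨e, he, hve⟩)⟩
  have hdual {J : Finset V} {C' : Finset (Finset V)} (hJ : IsIndep E J)
      (hC' : IsEdgeCover E C') : J.card ≤ C'.card :=
    hJ.card_le_card hC'.1 fun v _ => hC'.2 v
  rw [IsGreatest.csSup_eq (a := I.card), IsLeast.csInf_eq (a := C.card)]
  · exact (hdual hI hC).antisymm hCI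
  · refine ⟨⟨C, hC, rfl⟩, ?_⟩
    rintro _ ⟨C', hC', rfl⟩
    exact hCI.trans (hdual hI hC')
  · refine ⟨⟨I, hI, rfl⟩, ?_⟩
    rintro _ ⟨J, hJ, rfl⟩
    exact (hdual hJ hC).trans hCI
end

section
/- Let H be a hypergraph with a generalized hypertree decomposition of width k, let ℓ be the maximum size of an independent set of H, and let ℓ' be the maximum size of an independent set of H'=(V, {χ_t | t ∈ T}) (the hypergraph of blocks of the decomposition). Then ℓ/k ≤ ℓ' ≤ ℓ. -/
/-!
Every bag meets an independent set `I` of `H` in at most `k` vertices, since the `≤ k` edges of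
`λ_t` cover `χ_t` and each contains at most one vertex of `I`. Two vertices conflict in `H'` when
their subtrees `{t | v ∈ χ_t}` meet. Among finitely many subtrees of a rooted tree, the one whose
highest node `t` is deepest has `t` in every subtree meeting it; so some vertex of `I` conflicts
with fewer than `k` others of `I`. Greedily keeping such a vertex and discarding its conflicts
yields an independent set of `H'` inside `I` of size `≥ |I| / k`. Conversely every edge lies in a
bag, so independent sets of `H'` are independent in `H`.
-/

open Finset

namespace SimpleGraph

variable {V : Type*} {G : SimpleGraph V}

theorem exists_isIndepSet_subset_card_le_mul [DecidableEq V] [DecidableRel G.Adj] (k : ℕ)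
    {I : Finset V} (h : ∀ S ⊆ I, S.Nonempty → ∃ v ∈ S, #{u ∈ S | G.Adj v u} < k) :
    ∃ J ⊆ I, G.IsIndepSet (J : Set V) ∧ #I ≤ k * #J := by
  induction I using Finset.strongInduction with
  | H I ih =>
  rcases I.eq_empty_or_nonempty with rfl | hI
  · exact ⟨∅, empty_subset _, by simp, by simp⟩
  obtain ⟨v, hvI, hv⟩ := h I subset_rfl hI
  set N := insert v {u ∈ I | G.Adj v u}
  have hNI : N ⊆ I := insert_subset hvI (filter_subset _ _)
  obtain ⟨J, hJ, hJind, hJcard⟩ := ih (I \ N) (sdiff_ssubset hNI (insert_nonempty _ _))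
    fun S hS => h S (hS.trans sdiff_subset)
  have hvJ : ∀ u ∈ J, u ∉ N := fun u hu => (mem_sdiff.1 (hJ hu)).2
  have hnadj : ∀ u ∈ J, ¬ G.Adj v u := fun u hu hadj =>
    hvJ u hu (mem_insert_of_mem (mem_filter.2 ⟨(mem_sdiff.1 (hJ hu)).1, hadj⟩))
  refine ⟨insert v J, insert_subset hvI (hJ.trans sdiff_subset), ?_, ?_⟩
  · rw [coe_insert, isIndepSet_iff]
    exact hJind.insert fun u hu _ => ⟨hnadj u hu, fun hadj => hnadj u hu hadj.symm⟩
  · have hNcard : #N ≤ k := (card_insert_le _ _).trans hv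
    have hsplit : #(I \ N) + #N = #I := card_sdiff_add_card_eq_card hNI
    rw [card_insert_of_notMem fun hv' => hvJ v hv' (mem_insert_self v _)]
    linarith

lemma Preconnected.exists_walk_support_subset_s6 {A : Set V} (hA : (G.induce A).Preconnected)
    {a b : V} (ha : a ∈ A) (hb : b ∈ A) : ∃ W : G.Walk a b, ∀ x ∈ W.support, x ∈ A := by
  obtain ⟨W⟩ := hA ⟨a, ha⟩ ⟨b, hb⟩
  refine ⟨W.map (Embedding.induce A).toHom, fun x hx => ?_⟩
  replace hx : x ∈ (W.map (Embedding.induce A).toHom).support := hx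
  simp only [Walk.support_map, List.mem_map] at hx
  obtain ⟨⟨y, hy⟩, -, rfl⟩ := hx
  exact hy

lemma Walk.eq_of_mem_support_of_length_eq_dist {x y r : V} {Q : G.Walk x r}
    (hQ : Q.length = G.dist x r) (hy : y ∈ Q.support) (hd : G.dist x r ≤ G.dist y r) :
    y = x := by
  classical
  have hsplit := congrArg Walk.length (Q.take_spec hy)
  rw [Walk.length_append] at hsplit
  have hdrop := G.dist_le (Q.dropUntil y hy)
  exact (Walk.eq_of_length_eq_zero (by omega : (Q.takeUntil y hy).length = 0)).symm

lemma IsAcyclic.support_subset_of_isPath (hG : G.IsAcyclic) {u v : V} {p : G.Walk u v}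
    (hp : p.IsPath) (q : G.Walk u v) : p.support ⊆ q.support := by
  classical
  have hpq : p = q.toPath := congrArg Subtype.val ((hG.subsingleton_path u v).elim ⟨p, hp⟩ _)
  exact hpq ▸ q.support_toPath_subset_support

/-- `y` followed by a shortest path from `x` to `r` is a path, so it lies inside every walk from
`y` to `r`. -/
lemma IsAcyclic.mem_support_of_adj_of_dist_le (hG : G.IsAcyclic) {x y r : V} (hadj : G.Adj y x)
    (hx : G.Reachable x r) (hd : G.dist x r ≤ G.dist y r) (p : G.Walk y r) : x ∈ p.support := by
  obtain ⟨Q, hQpath, hQ⟩ := hx.exists_path_of_dist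
  have hy : y ∉ Q.support := fun hy => hadj.ne (Walk.eq_of_mem_support_of_length_eq_dist hQ hy hd)
  exact hG.support_subset_of_isPath (hQpath.cons hy (h := hadj)) p
    (List.mem_cons_of_mem y Q.start_mem_support)

lemma IsAcyclic.mem_support_of_forall_dist_le (hG : G.IsAcyclic) {t r : V} (ht : G.Reachable t r)
    {a : V} (W : G.Walk a t) (hW : ∀ x ∈ W.support, G.dist t r ≤ G.dist x r) :
    ∀ p : G.Walk a r, t ∈ p.support := by
  induction W with
  | nil => exact fun p => p.start_mem_support
  | @cons a u t hadj W ih =>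
    have hu := ih ht fun x hx => hW x (by simp [hx])
    intro p
    by_cases htu : t = u
    · subst htu
      exact hG.mem_support_of_adj_of_dist_le hadj ht (hW a (by simp)) p
    · simpa [htu] using hu (.cons hadj.symm p)

lemma IsTree.exists_forall_mem_support (hG : G.IsTree) (r : V) {A : Set V}
    (hA : (G.induce A).Preconnected) (hne : A.Nonempty) :
    ∃ t ∈ A, ∀ a ∈ A, ∀ p : G.Walk a r, t ∈ p.support := by
  obtain ⟨t, ht, hmin⟩ := (measure fun x => G.dist x r).wf.has_min A hne
  refine ⟨t, ht, fun a ha => ?_⟩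
  obtain ⟨W, hW⟩ := hA.exists_walk_support_subset_s6 ha ht
  exact hG.isAcyclic.mem_support_of_forall_dist_le (hG.connected t r) W
    fun x hx => not_lt.1 (hmin x (hW x hx))

theorem IsTree.exists_mem_of_inter_nonempty (hG : G.IsTree) {ι : Type*} {S : Finset ι}
    (hS : S.Nonempty) {A : ι → Set V} (hA : ∀ i ∈ S, (G.induce (A i)).Preconnected) :
    ∃ i ∈ S, ∃ t, ∀ j ∈ S, (A i ∩ A j).Nonempty → t ∈ A i ∩ A j := by
  have hV : Nonempty V := hG.connected.nonempty
  have r : V := hV.some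
  have htop : ∀ i ∈ S, (A i).Nonempty →
      ∃ t ∈ A i, ∀ a ∈ A i, ∀ p : G.Walk a r, t ∈ p.support :=
    fun i hi hne => hG.exists_forall_mem_support r (hA i hi) hne
  choose! top htopA htop using htop
  -- `i` is the subtree whose highest node `top i` is deepest
  obtain ⟨i, hi, hmax⟩ := S.exists_max_image (fun i => G.dist (top i) r) hS
  refine ⟨i, hi, top i, fun j hj ⟨s, hsi, hsj⟩ => ⟨htopA i hi ⟨s, hsi⟩, ?_⟩⟩
  obtain ⟨W, hW⟩ := (hA j hj).exists_walk_support_subset_s6 hsj (htopA j hj ⟨s, hsj⟩)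
  obtain ⟨Q, -, hQ⟩ := (hG.connected (top j) r).exists_path_of_dist
  have hmem := htop i hi ⟨s, hsi⟩ s hsi (W.append Q)
  rw [Walk.mem_support_append_iff] at hmem
  rcases hmem with hmem | hmem
  · exact hW _ hmem
  · rw [Walk.eq_of_mem_support_of_length_eq_dist hQ hmem (hmax j hj)]
    exact htopA j hj ⟨s, hsj⟩

end SimpleGraph

namespace GHD

variable {V : Type} [DecidableEq V] {E : Finset (Finset V)} (D : GHD V E)

/-- The primal graph of the hypergraph of blocks `H' = (V, {χ_t})`. -/
def blockGraph : SimpleGraph V where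
  Adj u v := u ≠ v ∧ ∃ t, u ∈ D.chi t ∧ v ∈ D.chi t
  symm := ⟨fun _ _ h => ⟨h.1.symm, h.2.imp fun _ ht => ⟨ht.2, ht.1⟩⟩⟩
  loopless := ⟨fun _ h => h.1 rfl⟩

lemma isIndepSet_blockGraph_iff {J : Finset V} :
    D.blockGraph.IsIndepSet (J : Set V) ↔
      ∀ t, ∀ u ∈ J, ∀ v ∈ J, u ∈ D.chi t → v ∈ D.chi t → u = v := by
  simp only [SimpleGraph.isIndepSet_iff, Set.Pairwise, mem_coe, blockGraph, not_and, not_exists]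
  exact ⟨fun h t u hu v hv hut hvt => by_contra fun hne => h hu hv hne hne t hut hvt,
    fun h u hu v hv hne _ t hut hvt => hne (h t u hu v hv hut hvt)⟩

lemma card_inter_chi_le {I : Finset V} (hI : IsIndep E I) (t : D.T) :
    #(I ∩ D.chi t) ≤ #(D.lam t) :=
  card_le_card_of_forall_subsingleton (fun v e => v ∈ e)
    (fun v hv => D.guard t v (mem_inter.1 hv).2)
    fun e he _ hu _ hv =>
      hI e (D.lam_sub t he) _ (mem_inter.1 hu.1).1 _ (mem_inter.1 hv.1).1 hu.2 hv.2

lemma exists_isIndepSet_blockGraph {k : ℕ} (hk : 0 < k) (hw : ∀ t, #(D.lam t) ≤ k)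
    {I : Finset V} (hI : IsIndep E I) :
    ∃ J ⊆ I, D.blockGraph.IsIndepSet (J : Set V) ∧ #I ≤ k * #J := by
  classical
  refine SimpleGraph.exists_isIndepSet_subset_card_le_mul k fun S hSI hS => ?_
  obtain ⟨v, hv, t, ht⟩ := D.isTree.exists_mem_of_inter_nonempty hS
    (A := fun v => {t | v ∈ D.chi t}) fun v _ => D.conn v
  refine ⟨v, hv, ?_⟩
  rcases {u ∈ S | D.blockGraph.Adj v u}.eq_empty_or_nonempty with hN | ⟨u, hu⟩
  · rwa [hN, card_empty]
  have hvt : v ∈ D.chi t := by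
    obtain ⟨huS, -, s, hvs, hus⟩ := mem_filter.1 hu
    exact (ht u huS ⟨s, hvs, hus⟩).1
  have hsub : insert v {u ∈ S | D.blockGraph.Adj v u} ⊆ I ∩ D.chi t := by
    refine insert_subset (mem_inter.2 ⟨hSI hv, hvt⟩) fun w hw => ?_
    obtain ⟨hwS, -, s, hvs, hws⟩ := mem_filter.1 hw
    exact mem_inter.2 ⟨hSI hwS, (ht w hwS ⟨s, hvs, hws⟩).2⟩
  have hcard := (card_le_card hsub).trans ((D.card_inter_chi_le hI t).trans (hw t))
  rwa [card_insert_of_notMem fun h => (mem_filter.1 h).2.1 rfl, Nat.add_one_le_iff] at hcard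

end GHD

/-- Let H have a generalized hypertree decomposition of width k, let ℓ be the
maximum size of an independent set of H and ℓ' the maximum size of an independent
set of the hypergraph of blocks. Then ℓ / k ≤ ℓ' ≤ ℓ. -/
theorem blocks_indep_approx {V : Type} [DecidableEq V]
    (E : Finset (Finset V)) (k : ℕ) (D : GHD V E)
    (hw : ∀ t, (D.lam t).card ≤ k)
    (I I' : Finset V)
    (hI : IsIndep E I)
    (hImax : ∀ J : Finset V, IsIndep E J → J.card ≤ I.card)
    (hI' : ∀ t, ∀ u ∈ I', ∀ v ∈ I', u ∈ D.chi t → v ∈ D.chi t → u = v)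
    (hI'max : ∀ J : Finset V,
      (∀ t, ∀ u ∈ J, ∀ v ∈ J, u ∈ D.chi t → v ∈ D.chi t → u = v) →
      J.card ≤ I'.card) :
    (I.card : ℝ) / k ≤ I'.card ∧ I'.card ≤ I.card := by
  refine ⟨?_, hImax I' fun e he u hu v hv hue hve => ?_⟩
  · rcases k.eq_zero_or_pos with rfl | hk
    · simp
    obtain ⟨J, -, hJ, hIJ⟩ := D.exists_isIndepSet_blockGraph hk hw hI
    have hJI' := hI'max J (D.isIndepSet_blockGraph_iff.1 hJ)
    rw [div_le_iff₀ (by exact_mod_cast hk)]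
    exact_mod_cast hIJ.trans (by rw [mul_comm]; exact Nat.mul_le_mul_right k hJI')
  · obtain ⟨t, ht⟩ := D.edge_cover e he
    exact hI' t u hu v hv (ht hue) (ht hve)
end

section
/- Let G=(V,E) be a simple loopless graph and k a positive integer. Define the hypergraph H with vertex set V×{1,…,k} and edges: V_i = V×{i} for each i ∈ [k]; H_v = {v}×[k] for each v ∈ V; and for all i,j ∈ [k] the pairs {(u,i),(v,j)} for each edge uv ∈ E. Then G has an independent set of size k if and only if H has an independent set of size k. -/
def Hedges {V : Type} (G : SimpleGraph V) (k : ℕ) : Set (Set (V × Fin k)) :=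
  {s | (∃ i : Fin k, s = {p : V × Fin k | p.2 = i}) ∨
       (∃ v : V, s = {p : V × Fin k | p.1 = v}) ∨
       (∃ u v : V, ∃ i j : Fin k, G.Adj u v ∧ s = ({(u, i), (v, j)} : Set (V × Fin k)))}

/-! An independent set `J` of the hypergraph meets every layer `V × {i}` and every fibre
`{v} × [k]` at most once and projects to an independent set of `G`. So if `|J| = k`, its
projection to `V` is an independent set of size `k`; conversely an independent set
`{v₁, …, vₖ}` of `G` lifts to the transversal `{(v₁, 1), …, (vₖ, k)}`. -/

open Finset

variable {V : Type} (G : SimpleGraph V) {k : ℕ}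

theorem hedges_indep_iff {J : Finset (V × Fin k)} :
    (∀ e ∈ Hedges G k, ∀ p ∈ J, ∀ q ∈ J, p ∈ e → q ∈ e → p = q) ↔
      (J : Set (V × Fin k)).InjOn Prod.fst ∧ (J : Set (V × Fin k)).InjOn Prod.snd ∧
        ∀ p ∈ J, ∀ q ∈ J, ¬G.Adj p.1 q.1 := by
  constructor
  · intro h
    refine ⟨fun p hp q hq hpq => h _ (Or.inr (Or.inl ⟨p.1, rfl⟩)) p hp q hq rfl hpq.symm,
      fun p hp q hq hpq => h _ (Or.inl ⟨p.2, rfl⟩) p hp q hq rfl hpq.symm,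
      fun p hp q hq hadj => ?_⟩
    obtain rfl : p = q :=
      h _ (Or.inr (Or.inr ⟨p.1, q.1, p.2, q.2, hadj, rfl⟩)) p hp q hq (by simp) (by simp)
    exact G.irrefl hadj
  · rintro ⟨hfst, hsnd, hnadj⟩ e he p hp q hq hpe hqe
    rcases he with ⟨i, rfl⟩ | ⟨v, rfl⟩ | ⟨u, v, i, j, hadj, rfl⟩
    · exact hsnd hp hq (hpe.trans hqe.symm)
    · exact hfst hp hq (hpe.trans hqe.symm)
    · rcases hpe with rfl | rfl <;> rcases hqe with rfl | rfl
      · rfl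
      · exact absurd hadj (hnadj _ hp _ hq)
      · exact absurd hadj.symm (hnadj _ hp _ hq)
      · rfl

theorem clique_reduction_indep_iff_general {V : Type}
    (G : SimpleGraph V) (k : ℕ) :
    (∃ I : Finset V, I.card = k ∧ ∀ u ∈ I, ∀ v ∈ I, ¬ G.Adj u v) ↔
    (∃ J : Finset (V × Fin k), J.card = k ∧
      ∀ e ∈ Hedges G k, ∀ p ∈ J, ∀ q ∈ J, p ∈ e → q ∈ e → p = q) := by
  classical
  simp only [hedges_indep_iff]
  constructor
  · rintro ⟨I, hI, hind⟩
    let f : Fin k ↪ V :=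
      (I.equivFinOfCardEq hI).symm.toEmbedding.trans (Function.Embedding.subtype _)
    have hf : ∀ i, f i ∈ I := fun i => ((I.equivFinOfCardEq hI).symm i).2
    refine ⟨univ.image fun i => (f i, i), ?_, ?_, ?_, ?_⟩
    · rw [card_image_of_injective _ fun i j h => congrArg Prod.snd h, card_univ, Fintype.card_fin]
    · simp [Set.InjOn]
    · simp [Set.InjOn]
    · simpa using fun i j => hind _ (hf i) _ (hf j)
  · rintro ⟨J, hJ, hfst, -, hnadj⟩
    exact ⟨J.image Prod.fst, (card_image_of_injOn hfst).trans hJ, by simpa using hnadj⟩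

/-- G has an independent set of size k iff the hypergraph H constructed from G
and k has an independent set of size k. -/
theorem clique_reduction_indep_iff {V : Type} [DecidableEq V]
    (G : SimpleGraph V) (k : ℕ) (hk : 0 < k) :
    (∃ I : Finset V, I.card = k ∧ ∀ u ∈ I, ∀ v ∈ I, ¬ G.Adj u v) ↔
    (∃ J : Finset (V × Fin k), J.card = k ∧
      ∀ e ∈ Hedges G k, ∀ p ∈ J, ∀ q ∈ J, p ∈ e → q ∈ e → p = q) :=
  clique_reduction_indep_iff_general G k
end

section
/- Let (T,(λ_t),(χ_t)) be a hingetree decomposition of a hypergraph H, let t_j be a node of T, and let I ⊆ V_{t_j} (the union of all blocks in the subtree rooted at t_j) be an independent set of the hypergraph H_{t_j} whose edges are all edges appearing in guards within that subtree. Then I is an independent set of H_t, where t is the parent of t_j and H_t is defined analogously for the subtree rooted at t. -/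
structure Hinge (V : Type) [DecidableEq V] (E : Finset (Finset V)) extends GHD V E where
  inter : ∀ t₁ t₂, t₁ ≠ t₂ →
    ∃ e₁ ∈ lam t₁, ∃ e₂ ∈ lam t₂, chi t₁ ∩ chi t₂ ⊆ e₁ ∩ e₂
  guard_eq : ∀ t, ∀ v : V, v ∈ chi t ↔ ∃ e ∈ lam t, v ∈ e
  edge_in_guard : ∀ e ∈ E, ∃ t, e ∈ lam t

def Hinge.Et {V : Type} [DecidableEq V] {E : Finset (Finset V)}
    (D : Hinge V E) (t : D.T) : Set (Finset V) :=
  {e | ∃ s, D.toGHD.Desc t s ∧ e ∈ D.lam s}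

/-!
The blocks of a hingetree decomposition containing a vertex form a connected subtree, so a
vertex lying both in a block inside the subtree of `tj` and in a block outside it lies in
`χ tj` itself. Two vertices of `I` in a common guard edge of a node `s` outside the subtree
therefore lie in `χ s ∩ χ tj`, which by the hinge property is covered by a single guard edge
of `tj`; independence in `H_tj` then forces them to be equal.
-/

namespace GHD

variable {V : Type} [DecidableEq V] {E : Finset (Finset V)} (D : GHD V E)

lemma desc_refl (t : D.T) : D.Desc t t := fun p => p.start_mem_support

lemma mem_chi_of_desc_of_not_desc {tj s s' : D.T} {u : V}
    (hs' : D.Desc tj s') (hs : ¬ D.Desc tj s)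
    (hu' : u ∈ D.chi s') (hu : u ∈ D.chi s) : u ∈ D.chi tj := by
  obtain ⟨r⟩ := D.conn u ⟨s', hu'⟩ ⟨s, hu⟩
  let f : D.G.induce {t | u ∈ D.chi t} →g D.G := ⟨Subtype.val, id⟩
  obtain ⟨q, hq⟩ := not_forall.mp hs
  -- The walk from `s'` through blocks containing `u` to `s`, then to the root avoiding `tj`,
  -- must meet `tj` in its first part.
  have htj : tj ∈ (r.map f).support := by
    rcases (SimpleGraph.Walk.mem_support_append_iff _ _).mp (hs' ((r.map f).append q))
      with h | h
    · exact h
    · exact absurd h hq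
  rw [SimpleGraph.Walk.support_map] at htj
  obtain ⟨x, -, rfl⟩ := List.mem_map.mp htj
  exact x.2

end GHD

namespace Hinge

variable {V : Type} [DecidableEq V] {E : Finset (Finset V)} (D : Hinge V E)

lemma mem_chi_of_mem_lam {s : D.T} {e : Finset V} {u : V}
    (he : e ∈ D.lam s) (hu : u ∈ e) : u ∈ D.chi s :=
  (D.guard_eq s u).mpr ⟨e, he, hu⟩

lemma eq_of_mem_lam_of_indep_subtree {tj : D.T} {I : Set V}
    (hIsub : I ⊆ D.toGHD.Vt tj)
    (hI : ∀ e ∈ D.Et tj, ∀ u ∈ I, ∀ v ∈ I, u ∈ e → v ∈ e → u = v)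
    {s : D.T} {e : Finset V} (hes : e ∈ D.lam s) :
    ∀ u ∈ I, ∀ v ∈ I, u ∈ e → v ∈ e → u = v := by
  intro u hu v hv hue hve
  by_cases hdesc : D.toGHD.Desc tj s
  · exact hI e ⟨s, hdesc, hes⟩ u hu v hv hue hve
  have hstj : s ≠ tj := by
    rintro rfl
    exact hdesc (D.toGHD.desc_refl s)
  obtain ⟨_, -, e₂, he₂, hsub⟩ := D.inter s tj hstj
  have mem_e₂ : ∀ w ∈ I, w ∈ e → w ∈ e₂ := by
    intro w hw hwe
    obtain ⟨sw, hsw, hwsw⟩ := hIsub hw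
    have hws : w ∈ D.chi s := D.mem_chi_of_mem_lam hes hwe
    have hwtj : w ∈ D.chi tj := D.toGHD.mem_chi_of_desc_of_not_desc hsw hdesc hwsw hws
    exact (Finset.mem_inter.mp (hsub (Finset.mem_inter_of_mem hws hwtj))).2
  exact hI e₂ ⟨tj, D.toGHD.desc_refl tj, he₂⟩ u hu v hv (mem_e₂ u hu hue) (mem_e₂ v hv hve)

end Hinge

theorem hinge_subtree_indep_lift_general {V : Type} [DecidableEq V]
    (E : Finset (Finset V)) (D : Hinge V E) (t tj : D.T)
    (I : Set V) (hIsub : I ⊆ D.toGHD.Vt tj)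
    (hI : ∀ e ∈ D.Et tj, ∀ u ∈ I, ∀ v ∈ I, u ∈ e → v ∈ e → u = v) :
    ∀ e ∈ D.Et t, ∀ u ∈ I, ∀ v ∈ I, u ∈ e → v ∈ e → u = v := by
  rintro e ⟨s, -, hes⟩
  exact D.eq_of_mem_lam_of_indep_subtree hIsub hI hes

/-- In a hingetree decomposition, an independent set of the hypergraph H_{t_j}
of the subtree rooted at a node t_j, contained in the vertices V_{t_j} of that
subtree, is also an independent set of the hypergraph H_t of the subtree rooted
at the parent t of t_j. -/
theorem hinge_subtree_indep_lift {V : Type} [DecidableEq V]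
    (E : Finset (Finset V)) (D : Hinge V E) (t tj : D.T)
    (hadj : D.G.Adj t tj) (hparent : D.toGHD.Desc t tj)
    (I : Set V) (hIsub : I ⊆ D.toGHD.Vt tj)
    (hI : ∀ e ∈ D.Et tj, ∀ u ∈ I, ∀ v ∈ I, u ∈ e → v ∈ e → u = v) :
    ∀ e ∈ D.Et t, ∀ u ∈ I, ∀ v ∈ I, u ∈ e → v ∈ e → u = v :=
  hinge_subtree_indep_lift_general E D t tj I hIsub hI
end
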